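/- Let N ≥ 2 be an integer and let c = (c_i)_{0≤i≤N} be a nonnegative differentiable solution of the N-truncated non-isolated DGED system on an interval I ⊆ ℝ containing 0. Then the total mass is conserved: ∑_{i=0}^N i c_i(t) = ∑_{i=0}^N i c_i(0) for all t ∈ I. -/

import Mathlib

open Finset

/-- Truncated operator `Q^N_{1,i}`. -/
noncomputable def QN1 (a : ℕ → ℕ → ℕ → ℝ) (N : ℕ) (c : ℕ → ℝ) (i : ℕ) : ℝ :=
  ∑ k ∈ Finset.Icc 1 (N - i), ∑ j ∈ Finset.Icc 0 (N - k), a (i + k) j k * c (i + k) * c j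

/-- Truncated operator `Q^N_{2,i}`. -/
noncomputable def QN2 (a : ℕ → ℕ → ℕ → ℝ) (N : ℕ) (c : ℕ → ℝ) (i : ℕ) : ℝ :=
  -∑ k ∈ Finset.Icc 1 (N - i), ∑ j ∈ Finset.Icc k N, a j i k * c j * c i

/-- Truncated operator `Q^N_{3,i}`. -/
noncomputable def QN3 (a : ℕ → ℕ → ℕ → ℝ) (N : ℕ) (c : ℕ → ℝ) (i : ℕ) : ℝ :=
  ∑ k ∈ Finset.Icc 1 i, ∑ j ∈ Finset.Icc k N, a j (i - k) k * c j * c (i - k)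

/-- Truncated operator `Q^N_{4,i}`. -/
noncomputable def QN4 (a : ℕ → ℕ → ℕ → ℝ) (N : ℕ) (c : ℕ → ℝ) (i : ℕ) : ℝ :=
  -∑ k ∈ Finset.Icc 1 i, ∑ j ∈ Finset.Icc 0 (N - k), a i j k * c j * c i


/-- `c` is a solution of the `N`-truncated non-isolated DGED system on the set `I`. -/
def IsTruncSolNon (a : ℕ → ℕ → ℕ → ℝ) (N : ℕ) (I : Set ℝ) (c : ℕ → ℝ → ℝ) : Prop :=
  ∀ t ∈ I,
    HasDerivAt (c 0) 0 t ∧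
    (∀ i, 1 ≤ i → i ≤ N - 1 →
      HasDerivAt (c i)
        (QN1 a N (fun n => c n t) i + QN2 a N (fun n => c n t) i +
          QN3 a N (fun n => c n t) i + QN4 a N (fun n => c n t) i) t) ∧
    HasDerivAt (c N) (QN3 a N (fun n => c n t) N + QN4 a N (fun n => c n t) N) t

/-!
Testing the system against a weight `φ` turns `∑ᵢ φ(i) dcᵢ/dt` into a sum over single exchange
events, in which a cluster of size `m` hands `k` particles to a cluster of size `j`, weighted by
the change `φ(m - k) + φ(j + k) - φ(m) - φ(j)`. For `φ(i) = i` every such change is zero, so the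
mass has derivative zero on `I` and is constant there because `I` is convex.
-/

namespace Finset

theorem sum_range_succ_sum_Icc_one_sub_comm {M : Type*} [AddCommMonoid M] (N : ℕ)
    (f : ℕ → ℕ → M) :
    ∑ i ∈ range (N + 1), ∑ k ∈ Icc 1 (N - i), f i k
      = ∑ k ∈ Icc 1 N, ∑ i ∈ Icc 0 (N - k), f i k :=
  sum_comm' fun i k => by simp only [mem_range, mem_Icc]; omega

theorem sum_range_succ_sum_Icc_one_comm {M : Type*} [AddCommMonoid M] (N : ℕ)
    (f : ℕ → ℕ → M) :
    ∑ i ∈ range (N + 1), ∑ k ∈ Icc 1 i, f i k = ∑ k ∈ Icc 1 N, ∑ i ∈ Icc k N, f i k :=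
  sum_comm' fun i k => by simp only [mem_range, mem_Icc]; omega

theorem sum_Icc_zero_sub_add {M : Type*} [AddCommMonoid M] {k N : ℕ} (hk : k ≤ N)
    (g : ℕ → M) : ∑ i ∈ Icc 0 (N - k), g (i + k) = ∑ m ∈ Icc k N, g m := by
  have h : Icc k N = (Icc 0 (N - k)).map (addRightEmbedding k) := by
    rw [map_add_right_Icc, zero_add, Nat.sub_add_cancel hk]
  rw [h, sum_map]
  rfl

end Finset

-- The size `m` of the donor cluster ranges over `[k, N]`, the size `j` of the receiver over
-- `[0, N - k]`, so that both clusters stay in the truncation after the exchange.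
noncomputable def exchangeSum (N : ℕ) (F : ℕ → ℕ → ℕ → ℝ) : ℝ :=
  ∑ k ∈ Icc 1 N, ∑ m ∈ Icc k N, ∑ j ∈ Icc 0 (N - k), F m j k

section WeakFormulation

variable (a : ℕ → ℕ → ℕ → ℝ) (N : ℕ) (u φ : ℕ → ℝ)

theorem sum_mul_QN1 :
    ∑ i ∈ range (N + 1), φ i * QN1 a N u i
      = exchangeSum N fun m j k => φ (m - k) * (a m j k * u m * u j) := by
  simp only [QN1, mul_sum, exchangeSum]
  rw [sum_range_succ_sum_Icc_one_sub_comm]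
  refine sum_congr rfl fun k hk => ?_
  rw [← sum_Icc_zero_sub_add (mem_Icc.mp hk).2]
  simp only [Nat.add_sub_cancel]

theorem sum_mul_QN2 :
    ∑ i ∈ range (N + 1), φ i * QN2 a N u i
      = exchangeSum N fun m j k => -φ j * (a m j k * u m * u j) := by
  simp only [QN2, mul_neg, mul_sum, ← sum_neg_distrib, exchangeSum]
  rw [sum_range_succ_sum_Icc_one_sub_comm]
  refine sum_congr rfl fun k _ => ?_
  rw [sum_comm]
  refine sum_congr rfl fun m _ => sum_congr rfl fun j _ => ?_
  ring

theorem sum_mul_QN3 :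
    ∑ i ∈ range (N + 1), φ i * QN3 a N u i
      = exchangeSum N fun m j k => φ (j + k) * (a m j k * u m * u j) := by
  simp only [QN3, mul_sum, exchangeSum]
  rw [sum_range_succ_sum_Icc_one_comm]
  refine sum_congr rfl fun k hk => ?_
  rw [← sum_Icc_zero_sub_add (mem_Icc.mp hk).2, sum_comm]
  simp only [Nat.add_sub_cancel]

theorem sum_mul_QN4 :
    ∑ i ∈ range (N + 1), φ i * QN4 a N u i
      = exchangeSum N fun m j k => -φ m * (a m j k * u m * u j) := by
  simp only [QN4, mul_neg, mul_sum, ← sum_neg_distrib, exchangeSum]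
  rw [sum_range_succ_sum_Icc_one_comm]
  refine sum_congr rfl fun k _ => sum_congr rfl fun m _ => sum_congr rfl fun j _ => ?_
  ring

theorem sum_mul_QN_eq_exchangeSum :
    ∑ i ∈ range (N + 1), φ i * (QN1 a N u i + QN2 a N u i + QN3 a N u i + QN4 a N u i)
      = exchangeSum N fun m j k =>
          (φ (m - k) + φ (j + k) - φ m - φ j) * (a m j k * u m * u j) := by
  simp only [mul_add, sum_add_distrib]
  rw [sum_mul_QN1, sum_mul_QN2, sum_mul_QN3, sum_mul_QN4]
  simp only [exchangeSum, ← sum_add_distrib]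
  refine sum_congr rfl fun k _ => sum_congr rfl fun m _ => sum_congr rfl fun j _ => ?_
  ring

theorem sum_mul_QN_eq_zero :
    ∑ i ∈ range (N + 1), (i : ℝ) * (QN1 a N u i + QN2 a N u i + QN3 a N u i + QN4 a N u i)
      = 0 := by
  rw [sum_mul_QN_eq_exchangeSum]
  refine sum_eq_zero fun k _ => sum_eq_zero fun m hm => sum_eq_zero fun j _ => ?_
  push_cast [Nat.cast_sub (mem_Icc.mp hm).1]
  ring

end WeakFormulation

theorem QN1_self (a : ℕ → ℕ → ℕ → ℝ) (N : ℕ) (u : ℕ → ℝ) : QN1 a N u N = 0 := by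
  simp [QN1]

theorem QN2_self (a : ℕ → ℕ → ℕ → ℝ) (N : ℕ) (u : ℕ → ℝ) : QN2 a N u N = 0 := by
  simp [QN2]

theorem IsTruncSolNon.hasDerivAt_sum_mul {a : ℕ → ℕ → ℕ → ℝ} {N : ℕ} {I : Set ℝ}
    {c : ℕ → ℝ → ℝ} (hc : IsTruncSolNon a N I c) {φ : ℕ → ℝ} (hφ : φ 0 = 0) {t : ℝ}
    (ht : t ∈ I) :
    HasDerivAt (fun s => ∑ i ∈ range (N + 1), φ i * c i s)
      (∑ i ∈ range (N + 1), φ i * (QN1 a N (fun n => c n t) i + QN2 a N (fun n => c n t) i +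
        QN3 a N (fun n => c n t) i + QN4 a N (fun n => c n t) i)) t := by
  obtain ⟨hc₀, hc_mid, hc_N⟩ := hc t ht
  refine HasDerivAt.fun_sum fun i hi => ?_
  rcases Nat.eq_zero_or_pos i with rfl | hi₀
  · simpa [hφ] using hc₀.const_mul (φ 0)
  rcases eq_or_ne i N with rfl | hiN
  · simpa [QN1_self, QN2_self] using hc_N.const_mul (φ i)
  · exact (hc_mid i hi₀ (by rw [mem_range] at hi; omega)).const_mul (φ i)

theorem Convex.apply_eq_of_hasDerivAt_zero {E : Type*} [NormedAddCommGroup E] [NormedSpace ℝ E]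
    {s : Set ℝ} (hs : Convex ℝ s) {f : ℝ → E} (hf : ∀ x ∈ s, HasDerivAt f 0 x) {x y : ℝ}
    (hx : x ∈ s) (hy : y ∈ s) : f y = f x := by
  have h := hs.norm_image_sub_le_of_norm_hasDerivWithin_le
    (fun z hz => (hf z hz).hasDerivWithinAt) (fun _ _ => norm_zero.le) hx hy
  rwa [zero_mul, norm_le_zero_iff, sub_eq_zero] at h

theorem truncated_nonisolated_mass_conservation_general
    (a : ℕ → ℕ → ℕ → ℝ)
    (N : ℕ) (I : Set ℝ) (hI : Convex ℝ I) (hI0 : (0 : ℝ) ∈ I)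
    (c : ℕ → ℝ → ℝ) (hc : IsTruncSolNon a N I c)
    (t : ℝ) (ht : t ∈ I) :
    ∑ i ∈ Finset.range (N + 1), (i : ℝ) * c i t
      = ∑ i ∈ Finset.range (N + 1), (i : ℝ) * c i 0 := by
  have hmass : ∀ s ∈ I, HasDerivAt (fun s => ∑ i ∈ range (N + 1), (i : ℝ) * c i s) 0 s :=
    fun s hs => by simpa only [sum_mul_QN_eq_zero] using hc.hasDerivAt_sum_mul Nat.cast_zero hs
  exact hI.apply_eq_of_hasDerivAt_zero hmass hI0 ht

/-- Mass conservation for nonnegative solutions of the truncated non-isolated system. -/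
theorem truncated_nonisolated_mass_conservation
    (a : ℕ → ℕ → ℕ → ℝ) (ha : ∀ i j k, 0 ≤ a i j k)
    (hzero : ∀ p : ℕ, 1 ≤ p → a p 0 p = 0)
    (N : ℕ) (hN : 2 ≤ N) (I : Set ℝ) (hI : Convex ℝ I) (hI0 : (0 : ℝ) ∈ I)
    (c : ℕ → ℝ → ℝ) (hc : IsTruncSolNon a N I c)
    (hnn : ∀ i, i ≤ N → ∀ t ∈ I, 0 ≤ c i t)
    (t : ℝ) (ht : t ∈ I) :
    ∑ i ∈ Finset.range (N + 1), (i : ℝ) * c i t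
      = ∑ i ∈ Finset.range (N + 1), (i : ℝ) * c i 0 :=
  truncated_nonisolated_mass_conservation_general a N I hI hI0 c hc t ht
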